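/- Let B be a finite-dimensional algebra over a field k and let e, f ∈ B be idempotents. Let (Bf)* = Hom_k(Bf, k), regarded as a right B-module via (φ·b)(x) = φ(bx). Then the endofunctor Be ⊗_k (Bf)* ⊗_B − of the category of left B-modules is left adjoint to the endofunctor Bf ⊗_k eB ⊗_B −. -/

import Mathlib

open CategoryTheory

section Defs

variable {k : Type} [Field k] (B : Type) [Ring B] [Algebra k B]

/-- Right multiplication by `b` as an endomorphism of the left regular module `B`. -/
def rmulB (b : B) : B →ₗ[B] B where
  toFun x := x * b
  map_add' x y := add_mul x y b
  map_smul' c x := by simp [smul_eq_mul, mul_assoc]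

/-- Left multiplication by `b` as an endomorphism of the right regular module `B`. -/
def lmulB (b : B) : B →ₗ[Bᵐᵒᵖ] B where
  toFun x := b * x
  map_add' x y := mul_add b x y
  map_smul' c x := by simp [MulOpposite.smul_eq_mul_unop, mul_assoc]

/-- The left ideal `B·x` as a left `B`-submodule of `B`; for an idempotent `e`, `Bdot B e`
is the left module `Be`. -/
noncomputable def Bdot (x : B) : Submodule B B := LinearMap.range (rmulB B x)

/-- The right ideal `x·B` as a right `B`-submodule of `B`; for an idempotent `e`, `dotB B e`
is the right module `eB`. -/
noncomputable def dotB (x : B) : Submodule Bᵐᵒᵖ B := LinearMap.range (lmulB B x)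

variable {B}

/-- Left multiplication by `b : B` on the left module `Bf`, as a `k`-linear map. -/
noncomputable def smulMap (f : B) (b : B) : (Bdot B f) →ₗ[k] (Bdot B f) where
  toFun y := b • y
  map_add' x y := smul_add b x y
  map_smul' c y := (smul_comm c b y).symm

end Defs

/-!
Write `V = Bf`, finite-dimensional over `k` with basis `vᵢ` and dual basis `vᵢ*`. The unit
`m ↦ ∑ vᵢ ⊗ e ⊗ (e ⊗ vᵢ* ⊗ m)` is `B`-linear because the canonical element `∑ vᵢ ⊗ vᵢ*` of
`V ⊗_k V*` is `B`-invariant. The evaluation `u ⊗ y ⊗ n ↦ u ⊗ yn` identifies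
`V ⊗_k eB ⊗_B N` with `V ⊗_k eN ≅ Hom_k(V*, eN)`, so `ψ : M → G N` corresponds to
`x ⊗ φ ⊗ m ↦ x · ψ(m)(φ)`; both triangle identities come down to `∑ φ(vᵢ) vᵢ* = φ` and
`∑ vᵢ*(u) vᵢ = u`.

The functors are only known through universal properties tested on modules in the universe of
`B`. Since `Hom_ℤ(B, ℚ/ℤ)` cogenerates all `B`-modules, these properties already determine and
produce maps into modules of every universe.
-/

universe u u₁ u₂

def RegularCharacterModule (B : Type u) [Ring B] : Type u := B →+ AddCircle (1 : ℚ)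

namespace RegularCharacterModule

variable (B : Type u) [Ring B]

instance : AddCommGroup (RegularCharacterModule B) :=
  inferInstanceAs (AddCommGroup (B →+ _))

instance : FunLike (RegularCharacterModule B) B (AddCircle (1 : ℚ)) :=
  inferInstanceAs (FunLike (B →+ _) _ _)

instance : AddMonoidHomClass (RegularCharacterModule B) B (AddCircle (1 : ℚ)) :=
  inferInstanceAs (AddMonoidHomClass (B →+ _) _ _)

variable {B}

@[ext]
theorem ext {χ χ' : RegularCharacterModule B} (h : ∀ x, χ x = χ' x) : χ = χ' :=
  DFunLike.ext _ _ h

instance : Module B (RegularCharacterModule B) where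
  smul b χ := (χ : B →+ AddCircle (1 : ℚ)).comp (AddMonoidHom.mulRight b)
  one_smul χ := ext fun x => congrArg χ (mul_one x)
  mul_smul b b' χ := ext fun x => congrArg χ (mul_assoc x b b').symm
  smul_zero _ := rfl
  smul_add _ _ _ := rfl
  add_smul b b' χ := ext fun x => (congrArg χ (mul_add x b b')).trans (map_add χ _ _)
  zero_smul χ := ext fun x => (congrArg χ (mul_zero x)).trans (map_zero χ)

theorem exists_apply_ne_zero {N : Type*} [AddCommGroup N] [Module B N]
    {n : N} (hn : n ≠ 0) : ∃ h : N →ₗ[B] RegularCharacterModule B, h n ≠ 0 := by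
  obtain ⟨χ, hχ⟩ := CharacterModule.exists_character_apply_ne_zero_of_ne_zero hn
  refine ⟨{ toFun n' := AddMonoidHom.mk' (fun x => χ (x • n')) fun x y => by
              rw [add_smul, map_add]
            map_add' a a' := ext fun x => by
              show χ (x • (a + a')) = χ (x • a) + χ (x • a')
              rw [smul_add, map_add]
            map_smul' b a := ext fun x => by
              show χ (x • b • a) = χ ((x * b) • a)
              rw [mul_smul] }, fun h => hχ ?_⟩
  have h1 : χ ((1 : B) • n) = 0 := DFunLike.congr_fun h 1
  rwa [one_smul] at h1

theorem eq_of_forall_apply_eq {N : Type*} [AddCommGroup N] [Module B N]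
    {a a' : N} (h : ∀ χ : N →ₗ[B] RegularCharacterModule B, χ a = χ a') : a = a' := by
  by_contra hne
  obtain ⟨χ, hχ⟩ := exists_apply_ne_zero (B := B) (sub_ne_zero.2 hne)
  exact hχ (by rw [map_sub, h χ, sub_self])

end RegularCharacterModule

section Balanced

variable (B : Type u) [Ring B] (k : Type*) {X Y M : Type*} [AddCommMonoid X] [AddCommMonoid Y]
  [SMul k X] [SMul k Y] [SMul B X] [SMul Bᵐᵒᵖ Y] [AddCommGroup M] [Module B M]

structure IsBalanced {P : Type*} [AddCommGroup P] [Module B P] (β : X → Y → M → P) : Prop where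
  add_left : ∀ x x' y m, β (x + x') y m = β x y m + β x' y m
  add_mid : ∀ x y y' m, β x (y + y') m = β x y m + β x y' m
  add_right : ∀ x y m m', β x y (m + m') = β x y m + β x y m'
  smul_left_eq_smul_mid : ∀ (c : k) x y m, β (c • x) y m = β x (c • y) m
  op_smul_mid : ∀ (b : B) x y m, β x (MulOpposite.op b • y) m = β x y (b • m)
  smul_left : ∀ (b : B) x y m, β (b • x) y m = b • β x y m

/-- `θ` presents `T` as `(X ⊗_k Y) ⊗_B M`. -/
structure IsUniversalBalanced {T : Type*} [AddCommGroup T] [Module B T] (θ : X → Y → M → T) : Prop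
    extends IsBalanced B k θ where
  existsUnique_lift : ∀ (P : Type u) [AddCommGroup P] [Module B P] (β : X → Y → M → P),
    IsBalanced B k β → ∃! g : T →ₗ[B] P, ∀ x y m, g (θ x y m) = β x y m

variable {B k} {P Q T : Type*} [AddCommGroup P] [Module B P] [AddCommGroup Q] [Module B Q]
  [AddCommGroup T] [Module B T]

theorem IsBalanced.linearMap_comp {β : X → Y → M → P} (hβ : IsBalanced B k β) (h : P →ₗ[B] Q) :
    IsBalanced B k fun x y m => h (β x y m) where
  add_left x x' y m := by rw [hβ.add_left, map_add]
  add_mid x y y' m := by rw [hβ.add_mid, map_add]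
  add_right x y m m' := by rw [hβ.add_right, map_add]
  smul_left_eq_smul_mid c x y m := by rw [hβ.smul_left_eq_smul_mid]
  op_smul_mid b x y m := by rw [hβ.op_smul_mid]
  smul_left b x y m := by rw [hβ.smul_left, map_smul]

theorem IsBalanced.map_sum_left {β : X → Y → M → P} (hβ : IsBalanced B k β) {ι : Type*}
    (s : Finset ι) (x : ι → X) (y : Y) (m : M) : β (∑ i ∈ s, x i) y m = ∑ i ∈ s, β (x i) y m :=
  map_sum (AddMonoidHom.mk' (β · y m) fun x x' => hβ.add_left x x' y m) x s

namespace IsUniversalBalanced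

variable {θ : X → Y → M → T} (hθ : IsUniversalBalanced B k θ)
include hθ

theorem ext {g g' : T →ₗ[B] P} (h : ∀ x y m, g (θ x y m) = g' (θ x y m)) : g = g' := by
  ext z
  refine RegularCharacterModule.eq_of_forall_apply_eq (B := B) fun χ => ?_
  have := (hθ.existsUnique_lift _ _ (hθ.linearMap_comp (χ ∘ₗ g))).unique
    (y₁ := χ ∘ₗ g) (y₂ := χ ∘ₗ g') (fun _ _ _ => rfl) (fun x y m => by simp [h])
  exact LinearMap.congr_fun this z

theorem span_eq_top : Submodule.span B {t | ∃ x y m, θ x y m = t} = ⊤ := by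
  set S := Submodule.span B {t | ∃ x y m, θ x y m = t}
  have hmkQ : S.mkQ = 0 := hθ.ext fun x y m =>
    (Submodule.Quotient.mk_eq_zero S).2 (Submodule.subset_span ⟨x, y, m, rfl⟩)
  exact Submodule.eq_top_iff'.2 fun z => by simpa using LinearMap.congr_fun hmkQ z

theorem exists_lift {β : X → Y → M → P} (hβ : IsBalanced B k β) :
    ∃ g : T →ₗ[B] P, ∀ x y m, g (θ x y m) = β x y m := by
  choose gχ hgχ using fun χ : P →ₗ[B] RegularCharacterModule B =>
    (hθ.existsUnique_lift _ _ (hβ.linearMap_comp χ)).exists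
  -- the would-be image `w` of `z` is known through its characters
  have hval (z : T) : ∃ w : P, ∀ χ, χ w = gχ χ z := by
    have hz : z ∈ Submodule.span B {t | ∃ x y m, θ x y m = t} := hθ.span_eq_top ▸ trivial
    induction hz using Submodule.span_induction with
    | mem _ h =>
      obtain ⟨x, y, m, rfl⟩ := h
      exact ⟨β x y m, fun χ => (hgχ χ x y m).symm⟩
    | zero => exact ⟨0, fun χ => by simp⟩
    | add _ _ _ _ h h' =>
      obtain ⟨w, hw⟩ := h
      obtain ⟨w', hw'⟩ := h'
      exact ⟨w + w', fun χ => by simp [hw, hw']⟩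
    | smul b _ _ h =>
      obtain ⟨w, hw⟩ := h
      exact ⟨b • w, fun χ => by simp [hw]⟩
  choose g hg using hval
  refine ⟨{ toFun := g
            map_add' z z' := RegularCharacterModule.eq_of_forall_apply_eq (B := B) fun χ => by
              simp [hg]
            map_smul' b z := RegularCharacterModule.eq_of_forall_apply_eq (B := B) fun χ => by
              simp [hg] }, fun x y m => ?_⟩
  exact RegularCharacterModule.eq_of_forall_apply_eq (B := B) fun χ => by simp [hg, hgχ]

noncomputable def lift {β : X → Y → M → P} (hβ : IsBalanced B k β) : T →ₗ[B] P :=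
  (hθ.exists_lift hβ).choose

@[simp]
theorem lift_apply {β : X → Y → M → P} (hβ : IsBalanced B k β) (x : X) (y : Y) (m : M) :
    hθ.lift hβ (θ x y m) = β x y m :=
  (hθ.exists_lift hβ).choose_spec x y m

end IsUniversalBalanced

end Balanced

/-- The canonical element `∑ vᵢ ⊗ vᵢ*` of `V ⊗ V*` is invariant: `∑ L vᵢ ⊗ vᵢ* = ∑ vᵢ ⊗ vᵢ* ∘ L`,
tested against an arbitrary balanced biadditive `T`. -/
theorem Module.Basis.sum_map_coord_eq_sum_coord_comp {K V A ι : Type*} [CommSemiring K]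
    [AddCommMonoid V] [Module K V] [AddCommGroup A] [Fintype ι] (v : Module.Basis ι K V)
    (L : V →ₗ[K] V) (T : V → Module.Dual K V → A)
    (hT₁ : ∀ x x' φ, T (x + x') φ = T x φ + T x' φ) (hT₂ : ∀ x φ φ', T x (φ + φ') = T x φ + T x φ')
    (hT : ∀ (c : K) x φ, T (c • x) φ = T x (c • φ)) :
    ∑ i, T (L (v i)) (v.coord i) = ∑ i, T (v i) (v.coord i ∘ₗ L) := by
  have hsum₁ (φ) (x : ι → V) : T (∑ j, x j) φ = ∑ j, T (x j) φ :=
    map_sum (AddMonoidHom.mk' (T · φ) fun x x' => hT₁ x x' φ) x _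
  have hsum₂ (x) (φ : ι → Module.Dual K V) : T x (∑ j, φ j) = ∑ j, T x (φ j) :=
    map_sum (AddMonoidHom.mk' (T x) (hT₂ x)) φ _
  calc ∑ i, T (L (v i)) (v.coord i)
      = ∑ i, ∑ j, T (v.coord j (L (v i)) • v j) (v.coord i) := by
        simp_rw [← hsum₁, Module.Basis.coord_apply, Module.Basis.sum_repr]
    _ = ∑ j, T (v j) (∑ i, (v.coord j ∘ₗ L) (v i) • v.coord i) := by
        rw [Finset.sum_comm]
        simp_rw [hT, hsum₂, LinearMap.comp_apply]
    _ = ∑ i, T (v i) (v.coord i ∘ₗ L) := by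
        simp_rw [Module.Basis.sum_dual_apply_smul_coord]

noncomputable section Bdot

variable {k : Type} [Field k] {B : Type} [Ring B] [Algebra k B]

instance (f : B) : SMul Bᵐᵒᵖ ((Bdot B f) →ₗ[k] k) where
  smul b φ := φ ∘ₗ smulMap f b.unop

theorem op_algebraMap_smul_dotB {e : B} (c : k) (y : dotB B e) :
    MulOpposite.op (algebraMap k B c) • y = c • y :=
  Subtype.ext <| by
    show (y : B) * algebraMap k B c = c • (y : B)
    rw [Algebra.smul_def, Algebra.commutes]

variable {e : B} (he : e * e = e)

def Bdot.idem : Bdot B e := ⟨e, e, he⟩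

def dotB.idem : dotB B e := ⟨e, e, he⟩

@[simp]
theorem Bdot.coe_idem : (Bdot.idem he : B) = e := rfl

include he in
theorem Bdot.smul_idem (x : Bdot B e) : (x : B) • Bdot.idem he = x := by
  obtain ⟨_, a, rfl⟩ := x
  exact Subtype.ext (show a * e * e = a * e by rw [mul_assoc, he])

include he in
theorem dotB.op_smul_idem (y : dotB B e) : MulOpposite.op (y : B) • dotB.idem he = y := by
  obtain ⟨_, a, rfl⟩ := y
  exact Subtype.ext (show e * (e * a) = e * a by rw [← mul_assoc, he])

end Bdot

noncomputable section DualHom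

variable (k : Type) [Field k] {B : Type} [Ring B] [Algebra k B] (f : B)
  (N : Type*) [AddCommGroup N] [Module B N]

/-- `Hom_k((Bf)*, N)`, a left `B`-module through the right action on `(Bf)*`; for
finite-dimensional `Bf` this is `Bf ⊗_k N`. -/
def DualHom : Type _ := ((Bdot B f) →ₗ[k] k) →ₛₗ[algebraMap k B] N

namespace DualHom

instance : AddCommGroup (DualHom k f N) := inferInstanceAs (AddCommGroup (_ →ₛₗ[_] N))

instance : FunLike (DualHom k f N) ((Bdot B f) →ₗ[k] k) N :=
  inferInstanceAs (FunLike (_ →ₛₗ[_] N) _ _)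

instance : SemilinearMapClass (DualHom k f N) (algebraMap k B) ((Bdot B f) →ₗ[k] k) N :=
  inferInstanceAs (SemilinearMapClass (_ →ₛₗ[_] N) _ _ _)

variable {k f N}

@[ext]
theorem ext {H H' : DualHom k f N} (h : ∀ φ, H φ = H' φ) : H = H' := DFunLike.ext _ _ h

@[simp]
theorem add_apply (H H' : DualHom k f N) (φ : (Bdot B f) →ₗ[k] k) : (H + H') φ = H φ + H' φ :=
  rfl

theorem sum_apply {ι : Type*} (s : Finset ι) (H : ι → DualHom k f N) (φ : (Bdot B f) →ₗ[k] k) :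
    (∑ i ∈ s, H i) φ = ∑ i ∈ s, H i φ :=
  LinearMap.sum_apply s H φ

instance : Module B (DualHom k f N) where
  smul b H := LinearMap.comp (H : _ →ₛₗ[algebraMap k B] N) (smulMap f b).dualMap
  one_smul H := ext fun φ => congrArg H (LinearMap.ext fun x => congrArg φ (one_smul B x))
  mul_smul b b' H := ext fun φ => congrArg H (LinearMap.ext fun x => congrArg φ (mul_smul b b' x))
  smul_zero _ := rfl
  smul_add _ _ _ := rfl
  add_smul b b' H := ext fun φ => by
    show H (φ ∘ₗ smulMap f (b + b')) = H (φ ∘ₗ smulMap f b) + H (φ ∘ₗ smulMap f b')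
    rw [← map_add, ← LinearMap.comp_add]
    congr 2
    exact LinearMap.ext fun x => add_smul b b' x
  zero_smul H := ext fun φ => by
    show H (φ ∘ₗ smulMap f 0) = 0
    rw [show φ ∘ₗ smulMap f 0 = 0 from LinearMap.ext fun x => by simp [smulMap], map_zero]

theorem smul_apply (b : B) (H : DualHom k f N) (φ : (Bdot B f) →ₗ[k] k) :
    (b • H) φ = H (MulOpposite.op b • φ) := rfl

/-- The image of `u ⊗ n` under `Bf ⊗_k N ≅ Hom_k((Bf)*, N)`. -/
def evalSmul (u : Bdot B f) (n : N) : DualHom k f N where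
  toFun φ := algebraMap k B (φ u) • n
  map_add' φ φ' := by simp [add_smul]
  map_smul' c φ := by simp [mul_smul]

@[simp]
theorem evalSmul_apply (u : Bdot B f) (n : N) (φ : (Bdot B f) →ₗ[k] k) :
    evalSmul u n φ = algebraMap k B (φ u) • n := rfl

end DualHom

end DualHom

noncomputable section FromDualHom

variable {k : Type} [Field k] {B : Type} [Ring B] [Algebra k B] {e f : B} (he : e * e = e)
  {ι : Type*} [Fintype ι] (v : Module.Basis ι k (Bdot B f))
  {M N T : Type*} [AddCommGroup M] [Module B M] [AddCommGroup N] [Module B N]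
  [AddCommGroup T] [Module B T]

namespace IsBalanced

theorem algebraMap_smul_right {θ' : Bdot B f → dotB B e → N → T} (hθ' : IsBalanced B k θ')
    (c : k) (u : Bdot B f) (y : dotB B e) (n : N) :
    θ' u y (algebraMap k B c • n) = θ' (c • u) y n := by
  rw [← hθ'.op_smul_mid, op_algebraMap_smul_dotB, hθ'.smul_left_eq_smul_mid]

/-- `Bf ⊗_k N → Bf ⊗_k eB ⊗_B N`, `u ⊗ n ↦ u ⊗ e ⊗ n`, written with a basis of `Bf`. -/
def fromDualHom {θ' : Bdot B f → dotB B e → N → T} (hθ' : IsBalanced B k θ') :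
    DualHom k f N →ₗ[B] T where
  toFun H := ∑ i, θ' (v i) (dotB.idem he) (H (v.coord i))
  map_add' H H' := by simp [hθ'.add_right, Finset.sum_add_distrib]
  map_smul' b H := by
    simp_rw [DualHom.smul_apply, RingHom.id_apply, Finset.smul_sum, ← hθ'.smul_left]
    refine (v.sum_map_coord_eq_sum_coord_comp (smulMap f b) (fun u φ => θ' u _ (H φ))
      (fun u u' φ => hθ'.add_left u u' _ _) (fun u φ φ' => by simp [hθ'.add_right])
      (fun c u φ => ?_)).symm
    simp [map_smulₛₗ, hθ'.algebraMap_smul_right]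

variable {he v}

@[simp]
theorem fromDualHom_apply {θ' : Bdot B f → dotB B e → N → T} (hθ' : IsBalanced B k θ')
    (H : DualHom k f N) :
    hθ'.fromDualHom he v H = ∑ i, θ' (v i) (dotB.idem he) (H (v.coord i)) := rfl

theorem fromDualHom_eq_of_apply_eq_idem_smul {θ' : Bdot B f → dotB B e → N → T}
    (hθ' : IsBalanced B k θ') {H H' : DualHom k f N} (h : ∀ φ, H' φ = e • H φ) :
    hθ'.fromDualHom he v H' = hθ'.fromDualHom he v H := by
  refine Finset.sum_congr rfl fun i _ => ?_
  rw [h, ← hθ'.op_smul_mid]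
  exact congrArg (θ' _ · _) (dotB.op_smul_idem he (dotB.idem he))

def curry {θ : Bdot B e → ((Bdot B f) →ₗ[k] k) → M → T} (hθ : IsBalanced B k θ)
    (x : Bdot B e) : M →ₗ[B] DualHom k f T where
  toFun m :=
    { toFun φ := θ x φ m
      map_add' φ φ' := hθ.add_mid x φ φ' m
      map_smul' c φ := by
        rw [← hθ.smul_left_eq_smul_mid, ← hθ.smul_left, algebraMap_smul] }
  map_add' m m' := DualHom.ext fun φ => hθ.add_right x φ m m'
  map_smul' b m := DualHom.ext fun φ => (hθ.op_smul_mid b x φ m).symm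

@[simp]
theorem curry_apply {θ : Bdot B e → ((Bdot B f) →ₗ[k] k) → M → T} (hθ : IsBalanced B k θ)
    (x : Bdot B e) (m : M) (φ : (Bdot B f) →ₗ[k] k) : hθ.curry x m φ = θ x φ m := rfl

end IsBalanced

end FromDualHom

noncomputable section ToDualHom

variable {k : Type} [Field k] {B : Type} [Ring B] [Algebra k B] {e f : B} (he : e * e = e)
  {ι : Type*} [Fintype ι] (v : Module.Basis ι k (Bdot B f))
  {N T : Type*} [AddCommGroup N] [Module B N] [AddCommGroup T] [Module B T]

theorem algebraMap_smul_smul_comm (c : k) (b : B) (n : N) :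
    algebraMap k B c • b • n = b • algebraMap k B c • n := by
  rw [smul_smul, Algebra.commutes, ← smul_smul]

variable (k N) in
theorem isBalanced_evalSmul :
    IsBalanced B k fun (u : Bdot B f) (y : dotB B e) (n : N) =>
      DualHom.evalSmul (k := k) u ((y : B) • n) where
  add_left u u' y n := DualHom.ext fun φ => by simp [add_smul]
  add_mid u y y' n := DualHom.ext fun φ => by simp [add_smul]
  add_right u y n n' := DualHom.ext fun φ => by simp
  smul_left_eq_smul_mid c u y n := DualHom.ext fun φ => by
    show algebraMap k B (φ (c • u)) • (y : B) • n = algebraMap k B (φ u) • (c • (y : B)) • n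
    rw [map_smul, smul_eq_mul, map_mul, mul_smul, Algebra.smul_def, mul_smul,
      algebraMap_smul_smul_comm c]
  op_smul_mid b u y n := DualHom.ext fun φ => by simp [MulOpposite.smul_eq_mul_unop, mul_smul]
  smul_left b u y n := rfl

namespace IsUniversalBalanced

variable {θ' : Bdot B f → dotB B e → N → T} (hθ' : IsUniversalBalanced B k θ')

/-- The evaluation `Bf ⊗_k eB ⊗_B N → Bf ⊗_k N`, `u ⊗ y ⊗ n ↦ u ⊗ y n`. -/
def toDualHom : T →ₗ[B] DualHom k f N := hθ'.lift (isBalanced_evalSmul k N)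

@[simp]
theorem toDualHom_apply (u : Bdot B f) (y : dotB B e) (n : N) :
    hθ'.toDualHom (θ' u y n) = DualHom.evalSmul u ((y : B) • n) :=
  hθ'.lift_apply _ u y n

theorem toDualHom_fromDualHom (H : DualHom k f N) (φ : (Bdot B f) →ₗ[k] k) :
    hθ'.toDualHom (hθ'.fromDualHom he v H) φ = e • H φ := by
  simp only [IsBalanced.fromDualHom_apply, map_sum, DualHom.sum_apply, toDualHom_apply,
    DualHom.evalSmul_apply, dotB.idem, algebraMap_smul_smul_comm, ← Finset.smul_sum]
  conv_rhs => rw [← v.sum_dual_apply_smul_coord φ, map_sum]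
  simp [map_smulₛₗ]

theorem fromDualHom_toDualHom (ξ : T) : hθ'.fromDualHom he v (hθ'.toDualHom ξ) = ξ := by
  refine LinearMap.congr_fun (hθ'.ext (g := hθ'.fromDualHom he v ∘ₗ hθ'.toDualHom)
    (g' := LinearMap.id) fun u y n => ?_) ξ
  simp only [LinearMap.comp_apply, toDualHom_apply, IsBalanced.fromDualHom_apply,
    DualHom.evalSmul_apply, LinearMap.id_apply]
  calc ∑ i, θ' (v i) (dotB.idem he) (algebraMap k B (v.coord i u) • (y : B) • n)
      = ∑ i, θ' (v.coord i u • v i) y n := Finset.sum_congr rfl fun i _ => by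
        rw [algebraMap_smul_smul_comm, ← hθ'.op_smul_mid, dotB.op_smul_idem he,
          hθ'.algebraMap_smul_right]
    _ = θ' u y n := by
        rw [← hθ'.map_sum_left]
        simp [Module.Basis.coord_apply, Module.Basis.sum_repr]

end IsUniversalBalanced

end ToDualHom

namespace CategoryTheory.Adjunction

variable {C D : Type*} [Category C] [Category D] {F : C ⥤ D} {G : D ⥤ C}

noncomputable def mkOfUnitBijective (η : 𝟭 C ⟶ F ⋙ G)
    (hη : ∀ X Y, Function.Bijective fun g : F.obj X ⟶ Y => η.app X ≫ G.map g) : F ⊣ G :=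
  mkOfHomEquiv
    { homEquiv X Y := Equiv.ofBijective _ (hη X Y)
      homEquiv_naturality_left_symm {X' X Y} f g := (Equiv.ofBijective _ (hη X' Y)).injective <| by
        conv_lhs => rw [Equiv.apply_symm_apply, ← (Equiv.ofBijective _ (hη X Y)).apply_symm_apply g]
        simp only [Equiv.ofBijective_apply, Functor.map_comp]
        simpa using η.naturality_assoc f _ }

end CategoryTheory.Adjunction

section TensorFunctor

variable (B : Type u) [Ring B] (k : Type*) {X Y : Type*} [AddCommMonoid X] [AddCommMonoid Y]
  [SMul k X] [SMul k Y] [SMul B X] [SMul Bᵐᵒᵖ Y]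

/-- `(F, θ)` is a model of the functor `(X ⊗_k Y) ⊗_B −`. -/
structure IsTensorFunctor (F : ModuleCat.{u₁} B ⥤ ModuleCat.{u₂} B)
    (θ : ∀ M : ModuleCat.{u₁} B, X → Y → M → F.obj M) : Prop where
  isUniversal (M : ModuleCat.{u₁} B) : IsUniversalBalanced B k (θ M)
  naturality {M M' : ModuleCat.{u₁} B} (ψ : M ⟶ M') (x : X) (y : Y) (m : M) :
    F.map ψ (θ M x y m) = θ M' x y (ψ m)

end TensorFunctor

noncomputable section TensorAdjunction

open CategoryTheory

variable {k : Type} [Field k] {B : Type} [Ring B] [Algebra k B] {e f : B} (he : e * e = e)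
  {ι : Type*} [Fintype ι] (v : Module.Basis ι k (Bdot B f))

theorem isBalanced_smul_apply {M N : Type*} [AddCommGroup M] [Module B M] [AddCommGroup N]
    [Module B N] (H : M →ₗ[B] DualHom k f N) :
    IsBalanced B k fun (x : Bdot B e) φ m => (x : B) • H m φ where
  add_left x x' φ m := by simp [add_smul]
  add_mid x φ φ' m := by simp [smul_add]
  add_right x φ m m' := by simp [smul_add]
  smul_left_eq_smul_mid c x φ m := by
    rw [Submodule.coe_smul_of_tower, Algebra.smul_def, Algebra.commutes, mul_smul, map_smulₛₗ]
  op_smul_mid b x φ m := by rw [map_smul H, DualHom.smul_apply]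
  smul_left b x φ m := by rw [Submodule.coe_smul, smul_eq_mul, mul_smul]

variable {F : ModuleCat.{u₁} B ⥤ ModuleCat.{u₂} B}
  {θ : ∀ M : ModuleCat.{u₁} B, Bdot B e → ((Bdot B f) →ₗ[k] k) → M → F.obj M}
  (hF : IsTensorFunctor B k F θ)
  {G : ModuleCat.{u₂} B ⥤ ModuleCat.{u₁} B}
  {θ' : ∀ N : ModuleCat.{u₂} B, Bdot B f → dotB B e → N → G.obj N}
  (hG : IsTensorFunctor B k G θ')

def tensorUnit : 𝟭 _ ⟶ F ⋙ G where
  app M := ModuleCat.ofHom <|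
    (hG.isUniversal (F.obj M)).fromDualHom he v ∘ₗ (hF.isUniversal M).curry (Bdot.idem he)
  naturality M M' ρ := by
    ext m
    simp [hF.naturality, hG.naturality, map_sum]

theorem tensorUnit_comp_map_apply {M : ModuleCat.{u₁} B} {N : ModuleCat.{u₂} B} (g : F.obj M ⟶ N)
    (m : M) : ((tensorUnit he v hF hG).app M ≫ G.map g) m = (hG.isUniversal N).fromDualHom he v
      (((hF.isUniversal M).linearMap_comp g.hom).curry (Bdot.idem he) m) := by
  simp [tensorUnit, hG.naturality, map_sum]

theorem apply_eq_smul_toDualHom {M : ModuleCat.{u₁} B} {N : ModuleCat.{u₂} B} (g : F.obj M ⟶ N)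
    (x : Bdot B e) (φ : (Bdot B f) →ₗ[k] k) (m : M) :
    g (θ M x φ m) = (x : B) •
      (hG.isUniversal N).toDualHom (((tensorUnit he v hF hG).app M ≫ G.map g) m) φ := by
  have hidem : e • Bdot.idem he = Bdot.idem he := Bdot.smul_idem he (Bdot.idem he)
  rw [tensorUnit_comp_map_apply, IsUniversalBalanced.toDualHom_fromDualHom, IsBalanced.curry_apply,
    ← map_smul g.hom, ← (hF.isUniversal M).smul_left, hidem, ← map_smul g.hom,
    ← (hF.isUniversal M).smul_left, Bdot.smul_idem he]

theorem tensorUnit_comp_map_bijective (M : ModuleCat.{u₁} B) (N : ModuleCat.{u₂} B) :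
    Function.Bijective fun g : F.obj M ⟶ N => (tensorUnit he v hF hG).app M ≫ G.map g := by
  constructor
  · intro g g' hgg
    ext1
    refine (hF.isUniversal M).ext fun x φ m => ?_
    rw [apply_eq_smul_toDualHom he v hF hG, apply_eq_smul_toDualHom he v hF hG]
    exact congrArg (fun ψ : M ⟶ G.obj N => (x : B) • (hG.isUniversal N).toDualHom (ψ m) φ) hgg
  · intro ψ
    let g := (hF.isUniversal M).lift (isBalanced_smul_apply ((hG.isUniversal N).toDualHom ∘ₗ ψ.hom))
    refine ⟨ModuleCat.ofHom g, ?_⟩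
    ext m
    rw [tensorUnit_comp_map_apply, ← (hG.isUniversal N).fromDualHom_toDualHom he v (ψ m)]
    exact IsBalanced.fromDualHom_eq_of_apply_eq_idem_smul _ fun φ => by simp [g]

def tensorAdjunction : F ⊣ G :=
  Adjunction.mkOfUnitBijective (tensorUnit he v hF hG) (tensorUnit_comp_map_bijective he v hF hG)

end TensorAdjunction

theorem stmt_12_general {k : Type} [Field k] (B : Type) [Ring B] [Algebra k B]
    [FiniteDimensional k B]
    (e f : B) (he : e * e = e)
    -- the functor `Be ⊗_k (Bf)* ⊗_B −`
    (F : ModuleCat B ⥤ ModuleCat B)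
    (θ : ∀ M : ModuleCat B, (Bdot B e) → ((Bdot B f) →ₗ[k] k) → M → F.obj M)
    (hθ1 : ∀ (M : ModuleCat B) (x x' : Bdot B e) (φ : (Bdot B f) →ₗ[k] k) (m : M),
      θ M (x + x') φ m = θ M x φ m + θ M x' φ m)
    (hθ2 : ∀ (M : ModuleCat B) (x : Bdot B e) (φ φ' : (Bdot B f) →ₗ[k] k) (m : M),
      θ M x (φ + φ') m = θ M x φ m + θ M x φ' m)
    (hθ3 : ∀ (M : ModuleCat B) (x : Bdot B e) (φ : (Bdot B f) →ₗ[k] k) (m m' : M),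
      θ M x φ (m + m') = θ M x φ m + θ M x φ m')
    (hθk : ∀ (M : ModuleCat B) (c : k) (x : Bdot B e) (φ : (Bdot B f) →ₗ[k] k) (m : M),
      θ M (c • x) φ m = θ M x (c • φ) m)
    (hθbal : ∀ (M : ModuleCat B) (b : B) (x : Bdot B e) (φ : (Bdot B f) →ₗ[k] k) (m : M),
      θ M x (φ ∘ₗ smulMap f b) m = θ M x φ (b • m))
    (hθleft : ∀ (M : ModuleCat B) (b : B) (x : Bdot B e) (φ : (Bdot B f) →ₗ[k] k) (m : M),
      θ M (b • x) φ m = b • θ M x φ m)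
    (hθuniv : ∀ (M : ModuleCat B) (P : Type) [AddCommGroup P] [Module B P]
      (β : (Bdot B e) → ((Bdot B f) →ₗ[k] k) → M → P),
      (∀ x x' φ m, β (x + x') φ m = β x φ m + β x' φ m) →
      (∀ x φ φ' m, β x (φ + φ') m = β x φ m + β x φ' m) →
      (∀ x φ m m', β x φ (m + m') = β x φ m + β x φ m') →
      (∀ (c : k) x φ m, β (c • x) φ m = β x (c • φ) m) →
      (∀ (b : B) x φ m, β x (φ ∘ₗ smulMap f b) m = β x φ (b • m)) →
      (∀ (b : B) x φ m, β (b • x) φ m = b • β x φ m) →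
      ∃! g : F.obj M →ₗ[B] P, ∀ x φ m, g (θ M x φ m) = β x φ m)
    (hθnat : ∀ (M M' : ModuleCat B) (ψ : M ⟶ M') (x : Bdot B e)
      (φ : (Bdot B f) →ₗ[k] k) (m : M),
      F.map ψ (θ M x φ m) = θ M' x φ (ψ m))
    -- the functor `Bf ⊗_k eB ⊗_B −`
    (G : ModuleCat B ⥤ ModuleCat B)
    (θ' : ∀ M : ModuleCat B, (Bdot B f) → (dotB B e) → M → G.obj M)
    (hθ'1 : ∀ (M : ModuleCat B) (x x' : Bdot B f) (y : dotB B e) (m : M),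
      θ' M (x + x') y m = θ' M x y m + θ' M x' y m)
    (hθ'2 : ∀ (M : ModuleCat B) (x : Bdot B f) (y y' : dotB B e) (m : M),
      θ' M x (y + y') m = θ' M x y m + θ' M x y' m)
    (hθ'3 : ∀ (M : ModuleCat B) (x : Bdot B f) (y : dotB B e) (m m' : M),
      θ' M x y (m + m') = θ' M x y m + θ' M x y m')
    (hθ'k : ∀ (M : ModuleCat B) (c : k) (x : Bdot B f) (y : dotB B e) (m : M),
      θ' M (c • x) y m = θ' M x (c • y) m)
    (hθ'bal : ∀ (M : ModuleCat B) (b : B) (x : Bdot B f) (y : dotB B e) (m : M),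
      θ' M x (MulOpposite.op b • y) m = θ' M x y (b • m))
    (hθ'left : ∀ (M : ModuleCat B) (b : B) (x : Bdot B f) (y : dotB B e) (m : M),
      θ' M (b • x) y m = b • θ' M x y m)
    (hθ'univ : ∀ (M : ModuleCat B) (P : Type) [AddCommGroup P] [Module B P]
      (β : (Bdot B f) → (dotB B e) → M → P),
      (∀ x x' y m, β (x + x') y m = β x y m + β x' y m) →
      (∀ x y y' m, β x (y + y') m = β x y m + β x y' m) →
      (∀ x y m m', β x y (m + m') = β x y m + β x y m') →
      (∀ (c : k) x y m, β (c • x) y m = β x (c • y) m) →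
      (∀ (b : B) x y m, β x (MulOpposite.op b • y) m = β x y (b • m)) →
      (∀ (b : B) x y m, β (b • x) y m = b • β x y m) →
      ∃! g : G.obj M →ₗ[B] P, ∀ x y m, g (θ' M x y m) = β x y m)
    (hθ'nat : ∀ (M M' : ModuleCat B) (ψ : M ⟶ M') (x : Bdot B f) (y : dotB B e) (m : M),
      G.map ψ (θ' M x y m) = θ' M' x y (ψ m)) :
    Nonempty (F ⊣ G) := by
  -- `hθbal` is `op_smul_mid` for the action `op b • φ = φ ∘ₗ smulMap f b` on `(Bf)*`
  have hF : IsTensorFunctor B k F θ :=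
    ⟨fun M => ⟨⟨hθ1 M, hθ2 M, hθ3 M, hθk M, hθbal M, hθleft M⟩,
      fun P _ _ β hβ => hθuniv M P β hβ.1 hβ.2 hβ.3 hβ.4 hβ.5 hβ.6⟩, hθnat _ _⟩
  have hG : IsTensorFunctor B k G θ' :=
    ⟨fun N => ⟨⟨hθ'1 N, hθ'2 N, hθ'3 N, hθ'k N, hθ'bal N, hθ'left N⟩,
      fun P _ _ β hβ => hθ'univ N P β hβ.1 hβ.2 hβ.3 hβ.4 hβ.5 hβ.6⟩, hθ'nat _ _⟩
  have : FiniteDimensional k (Bdot B f) :=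
    FiniteDimensional.of_injective ((Bdot B f).subtype.restrictScalars k) Subtype.val_injective
  exact ⟨tensorAdjunction he (Module.finBasis k (Bdot B f)) hF hG⟩

/-- let `B` be a finite-dimensional `k`-algebra and `e, f ∈ B` idempotents.
Then the endofunctor `Be ⊗_k (Bf)* ⊗_B −` of the category of left `B`-modules is left
adjoint to the endofunctor `Bf ⊗_k eB ⊗_B −`, where `(Bf)* = Hom_k(Bf, k)` carries the
right `B`-action `(φ · b)(x) = φ(bx)`.

The two endofunctors are formalized as functors `F`, `G` on `ModuleCat B` equipped, for each
module `M`, with a universal triadditive map: for `F` a map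
`θ : Be → (Bf)* → M → F.obj M` which is additive in each variable, `k`-balanced in the
first two variables, `B`-balanced in the last two variables (relative to the right action
`(φ · b) = φ ∘ (b • −)` of `B` on `(Bf)*`), left `B`-equivariant in the first variable,
universal among such maps, and natural in `M`; and for `G` the analogous data on
`Bf × eB × M`. This characterizes `F ≅ (Be ⊗_k (Bf)*) ⊗_B −` and
`G ≅ (Bf ⊗_k eB) ⊗_B −` uniquely up to natural isomorphism. -/
theorem stmt_12 {k : Type} [Field k] (B : Type) [Ring B] [Algebra k B]
    [FiniteDimensional k B]
    (e f : B) (he : e * e = e) (hf : f * f = f)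
    -- the functor `Be ⊗_k (Bf)* ⊗_B −`
    (F : ModuleCat B ⥤ ModuleCat B)
    (θ : ∀ M : ModuleCat B, (Bdot B e) → ((Bdot B f) →ₗ[k] k) → M → F.obj M)
    (hθ1 : ∀ (M : ModuleCat B) (x x' : Bdot B e) (φ : (Bdot B f) →ₗ[k] k) (m : M),
      θ M (x + x') φ m = θ M x φ m + θ M x' φ m)
    (hθ2 : ∀ (M : ModuleCat B) (x : Bdot B e) (φ φ' : (Bdot B f) →ₗ[k] k) (m : M),
      θ M x (φ + φ') m = θ M x φ m + θ M x φ' m)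
    (hθ3 : ∀ (M : ModuleCat B) (x : Bdot B e) (φ : (Bdot B f) →ₗ[k] k) (m m' : M),
      θ M x φ (m + m') = θ M x φ m + θ M x φ m')
    (hθk : ∀ (M : ModuleCat B) (c : k) (x : Bdot B e) (φ : (Bdot B f) →ₗ[k] k) (m : M),
      θ M (c • x) φ m = θ M x (c • φ) m)
    (hθbal : ∀ (M : ModuleCat B) (b : B) (x : Bdot B e) (φ : (Bdot B f) →ₗ[k] k) (m : M),
      θ M x (φ ∘ₗ smulMap f b) m = θ M x φ (b • m))
    (hθleft : ∀ (M : ModuleCat B) (b : B) (x : Bdot B e) (φ : (Bdot B f) →ₗ[k] k) (m : M),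
      θ M (b • x) φ m = b • θ M x φ m)
    (hθuniv : ∀ (M : ModuleCat B) (P : Type) [AddCommGroup P] [Module B P]
      (β : (Bdot B e) → ((Bdot B f) →ₗ[k] k) → M → P),
      (∀ x x' φ m, β (x + x') φ m = β x φ m + β x' φ m) →
      (∀ x φ φ' m, β x (φ + φ') m = β x φ m + β x φ' m) →
      (∀ x φ m m', β x φ (m + m') = β x φ m + β x φ m') →
      (∀ (c : k) x φ m, β (c • x) φ m = β x (c • φ) m) →
      (∀ (b : B) x φ m, β x (φ ∘ₗ smulMap f b) m = β x φ (b • m)) →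
      (∀ (b : B) x φ m, β (b • x) φ m = b • β x φ m) →
      ∃! g : F.obj M →ₗ[B] P, ∀ x φ m, g (θ M x φ m) = β x φ m)
    (hθnat : ∀ (M M' : ModuleCat B) (ψ : M ⟶ M') (x : Bdot B e)
      (φ : (Bdot B f) →ₗ[k] k) (m : M),
      F.map ψ (θ M x φ m) = θ M' x φ (ψ m))
    -- the functor `Bf ⊗_k eB ⊗_B −`
    (G : ModuleCat B ⥤ ModuleCat B)
    (θ' : ∀ M : ModuleCat B, (Bdot B f) → (dotB B e) → M → G.obj M)
    (hθ'1 : ∀ (M : ModuleCat B) (x x' : Bdot B f) (y : dotB B e) (m : M),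
      θ' M (x + x') y m = θ' M x y m + θ' M x' y m)
    (hθ'2 : ∀ (M : ModuleCat B) (x : Bdot B f) (y y' : dotB B e) (m : M),
      θ' M x (y + y') m = θ' M x y m + θ' M x y' m)
    (hθ'3 : ∀ (M : ModuleCat B) (x : Bdot B f) (y : dotB B e) (m m' : M),
      θ' M x y (m + m') = θ' M x y m + θ' M x y m')
    (hθ'k : ∀ (M : ModuleCat B) (c : k) (x : Bdot B f) (y : dotB B e) (m : M),
      θ' M (c • x) y m = θ' M x (c • y) m)
    (hθ'bal : ∀ (M : ModuleCat B) (b : B) (x : Bdot B f) (y : dotB B e) (m : M),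
      θ' M x (MulOpposite.op b • y) m = θ' M x y (b • m))
    (hθ'left : ∀ (M : ModuleCat B) (b : B) (x : Bdot B f) (y : dotB B e) (m : M),
      θ' M (b • x) y m = b • θ' M x y m)
    (hθ'univ : ∀ (M : ModuleCat B) (P : Type) [AddCommGroup P] [Module B P]
      (β : (Bdot B f) → (dotB B e) → M → P),
      (∀ x x' y m, β (x + x') y m = β x y m + β x' y m) →
      (∀ x y y' m, β x (y + y') m = β x y m + β x y' m) →
      (∀ x y m m', β x y (m + m') = β x y m + β x y m') →
      (∀ (c : k) x y m, β (c • x) y m = β x (c • y) m) →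
      (∀ (b : B) x y m, β x (MulOpposite.op b • y) m = β x y (b • m)) →
      (∀ (b : B) x y m, β (b • x) y m = b • β x y m) →
      ∃! g : G.obj M →ₗ[B] P, ∀ x y m, g (θ' M x y m) = β x y m)
    (hθ'nat : ∀ (M M' : ModuleCat B) (ψ : M ⟶ M') (x : Bdot B f) (y : dotB B e) (m : M),
      G.map ψ (θ' M x y m) = θ' M' x y (ψ m)) :
    Nonempty (F ⊣ G) :=
  stmt_12_general B e f he F θ hθ1 hθ2 hθ3 hθk hθbal hθleft hθuniv hθnat G θ' hθ'1 hθ'2 hθ'3 hθ'k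
    hθ'bal hθ'left hθ'univ hθ'nat
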